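/- arXiv:2202.03621 — 3 statements merged into one kernel-verified Lean document; each statement's English description precedes it below -/
import Mathlib

section
/- For all real x in [-1, 1], e^x ≤ 1 + x + (e - 2)·x². -/
/-! The Taylor remainder `exp x - 1 - x = ∑_{n ≥ 0} x^(n+2)/(n+2)!` is dominated termwise by
`(x/r)^2` times the same series at `r`, as soon as `|x| ≤ r`. For `r = 1` the dominating series
sums to `e - 2`. -/

open Nat

namespace Real

lemma hasSum_pow_div_factorial (x : ℝ) : HasSum (fun n ↦ x ^ n / (n ! : ℝ)) (exp x) := by
  rw [exp_eq_exp_ℝ]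
  exact NormedSpace.expSeries_div_hasSum_exp x

lemma hasSum_exp_sub_one_sub (x : ℝ) :
    HasSum (fun n ↦ x ^ (n + 2) / ((n + 2)! : ℝ)) (exp x - 1 - x) := by
  simpa [Finset.sum_range_succ, sub_sub] using
    (hasSum_nat_add_iff' 2).2 (hasSum_pow_div_factorial x)

lemma pow_add_two_le_sq_mul_pow {x r : ℝ} (hx : |x| ≤ r) (n : ℕ) :
    x ^ (n + 2) ≤ x ^ 2 * r ^ n := by
  have hxn : x ^ n ≤ r ^ n :=
    calc x ^ n ≤ |x| ^ n := (le_abs_self _).trans (abs_pow x n).le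
      _ ≤ r ^ n := pow_le_pow_left₀ (abs_nonneg x) hx n
  calc x ^ (n + 2) = x ^ 2 * x ^ n := by ring
    _ ≤ x ^ 2 * r ^ n := mul_le_mul_of_nonneg_left hxn (sq_nonneg x)

theorem exp_sub_one_sub_le_of_abs_le {x r : ℝ} (hr : 0 < r) (hx : |x| ≤ r) :
    exp x - 1 - x ≤ (exp r - 1 - r) * (x / r) ^ 2 := by
  refine hasSum_le (fun n ↦ ?_) (hasSum_exp_sub_one_sub x)
    ((hasSum_exp_sub_one_sub r).mul_right ((x / r) ^ 2))
  have hscale : r ^ (n + 2) * (x / r) ^ 2 = x ^ 2 * r ^ n := by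
    field_simp
    ring
  rw [div_mul_eq_mul_div, hscale]
  gcongr
  exact pow_add_two_le_sq_mul_pow hx n

end Real

theorem exp_le_quadratic_bound (x : ℝ) (hx : x ∈ Set.Icc (-1 : ℝ) 1) :
    Real.exp x ≤ 1 + x + (Real.exp 1 - 2) * x ^ 2 := by
  have h := Real.exp_sub_one_sub_le_of_abs_le one_pos (abs_le.2 hx)
  rw [div_one] at h
  linarith
end

section
/- The function x ↦ (e^x - (1 + x))/x² is monotonically increasing on [-1, 1] \ {0}, and its value at x = 1 equals e - 2. -/
/-!
With `f x = (eˣ - 1 - x) / x²` one computes `f' x = g x / x³` for `g x = (x - 2) eˣ + x + 2`.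
Since `g' x = 1 - (1 - x) eˣ ≥ 0` and `g 0 = 0`, `g` has the sign of `x`, so `f` is monotone on
each half-line. The two halves are joined through the value `1/2`: the monotone function
`eˣ - 1 - x - x²/2` vanishes at `0`, so `f x - 1/2` also has the sign of `x`.
-/

open Real Set

lemma MonotoneOn.compl_singleton {α β : Type*} [LinearOrder α] [Preorder β] {f : α → β} {c : α}
    (h₁ : MonotoneOn f (Iio c)) (h₂ : MonotoneOn f (Ioi c))
    (h : ∀ a < c, ∀ b, c < b → f a ≤ f b) : MonotoneOn f {c}ᶜ := by
  intro a ha b hb hab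
  rcases lt_or_gt_of_ne ha with ha' | ha'
  · rcases lt_or_gt_of_ne hb with hb' | hb'
    · exact h₁ ha' hb' hab
    · exact h a ha' b hb'
  · exact h₂ ha' (ha'.trans_le hab) hab

lemma one_sub_mul_exp_le_one (x : ℝ) : (1 - x) * exp x ≤ 1 := by
  calc (1 - x) * exp x ≤ exp (-x) * exp x := by gcongr; exact one_sub_le_exp_neg x
    _ = 1 := by rw [← exp_add, neg_add_cancel, exp_zero]

lemma monotone_sub_two_mul_exp_add_add_two : Monotone fun x : ℝ => (x - 2) * exp x + x + 2 := by
  refine monotone_of_hasDerivAt_nonneg (f' := fun x => 1 - (1 - x) * exp x) (fun x => ?_)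
    (fun x => sub_nonneg.2 (one_sub_mul_exp_le_one x))
  exact ((((hasDerivAt_id' x).sub_const 2).mul (hasDerivAt_exp x)).add (hasDerivAt_id' x)).add_const
    2 |>.congr_deriv (by ring)

lemma exp_le_quadratic_of_nonpos {x : ℝ} (hx : x ≤ 0) : exp x ≤ 1 + x + x ^ 2 / 2 := by
  have hmono : Monotone fun x : ℝ => exp x - 1 - x - x ^ 2 / 2 := by
    refine monotone_of_hasDerivAt_nonneg (f' := fun x => exp x - 1 - x) (fun x => ?_)
      (fun x => by simp only [Pi.zero_apply]; linarith [add_one_le_exp x])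
    exact (((hasDerivAt_exp x).sub_const 1).sub (hasDerivAt_id' x)).sub
      ((hasDerivAt_pow 2 x).div_const 2) |>.congr_deriv (by ring)
  have := hmono hx
  simp only [exp_zero] at this
  linarith

lemma hasDerivAt_exp_sub_one_add_div_sq {x : ℝ} (hx : x ≠ 0) :
    HasDerivAt (fun x : ℝ => (exp x - (1 + x)) / x ^ 2) (((x - 2) * exp x + x + 2) / x ^ 3) x := by
  refine ((hasDerivAt_exp x).sub ((hasDerivAt_id' x).const_add 1)).div (hasDerivAt_pow 2 x)
    (pow_ne_zero 2 hx) |>.congr_deriv ?_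
  simp only [Pi.sub_apply]
  field_simp
  ring

lemma sub_two_mul_exp_add_add_two_div_pow_three_nonneg (x : ℝ) :
    0 ≤ ((x - 2) * exp x + x + 2) / x ^ 3 := by
  rcases le_total 0 x with hx | hx
  · exact div_nonneg (by simpa using monotone_sub_two_mul_exp_add_add_two hx) (pow_nonneg hx 3)
  · exact div_nonneg_of_nonpos (by simpa using monotone_sub_two_mul_exp_add_add_two hx)
      (Odd.pow_nonpos (by decide) hx)

lemma monotoneOn_exp_sub_one_add_div_sq_of_convex {s : Set ℝ} (hs : Convex ℝ s) (h0 : 0 ∉ s) :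
    MonotoneOn (fun x : ℝ => (exp x - (1 + x)) / x ^ 2) s := by
  have hderiv : ∀ x ∈ s, HasDerivAt (fun x : ℝ => (exp x - (1 + x)) / x ^ 2)
      (((x - 2) * exp x + x + 2) / x ^ 3) x :=
    fun x hx => hasDerivAt_exp_sub_one_add_div_sq (ne_of_mem_of_not_mem hx h0)
  exact monotoneOn_of_hasDerivWithinAt_nonneg hs
    (fun x hx => (hderiv x hx).continuousAt.continuousWithinAt)
    (fun x hx => (hderiv x (interior_subset hx)).hasDerivWithinAt)
    (fun x _ => sub_two_mul_exp_add_add_two_div_pow_three_nonneg x)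

lemma exp_sub_one_add_div_sq_le_half {x : ℝ} (hx : x < 0) : (exp x - (1 + x)) / x ^ 2 ≤ 1 / 2 := by
  rw [div_le_iff₀ (by positivity [hx.ne])]
  linarith [exp_le_quadratic_of_nonpos hx.le]

lemma half_le_exp_sub_one_add_div_sq {x : ℝ} (hx : 0 < x) : 1 / 2 ≤ (exp x - (1 + x)) / x ^ 2 := by
  rw [le_div_iff₀ (by positivity)]
  linarith [quadratic_le_exp_of_nonneg hx.le]

lemma monotoneOn_exp_sub_one_add_div_sq :
    MonotoneOn (fun x : ℝ => (exp x - (1 + x)) / x ^ 2) {0}ᶜ :=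
  MonotoneOn.compl_singleton
    (monotoneOn_exp_sub_one_add_div_sq_of_convex (convex_Iio 0) self_notMem_Iio)
    (monotoneOn_exp_sub_one_add_div_sq_of_convex (convex_Ioi 0) self_notMem_Ioi)
    fun _ ha _ hb => (exp_sub_one_add_div_sq_le_half ha).trans (half_le_exp_sub_one_add_div_sq hb)

theorem exp_ratio_monotone :
    MonotoneOn (fun x : ℝ => (Real.exp x - (1 + x)) / x ^ 2)
      (Set.Icc (-1 : ℝ) 1 \ {0}) ∧
    (Real.exp 1 - (1 + 1)) / (1 : ℝ) ^ 2 = Real.exp 1 - 2 :=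
  ⟨monotoneOn_exp_sub_one_add_div_sq.mono fun _ hx => hx.2, by norm_num⟩
end

section
/- Let V : {0,1,…,T} → ℝ be nondecreasing with V_0 = 0 and V_t ≤ 2·V_{t-1} whenever V_{t-1} > 0 and t ≥ 1. Then ∑_{t : V_{t-1} > 0} (V_t - V_{t-1})/√(V_{t-1}) ≤ (√2 + 1)·√(V_T). -/
/-
Since b - a = (√b - √a)(√b + √a) and √b ≤ √2 √a when b ≤ 2a, each increment satisfies
(V_t - V_{t-1}) / √V_{t-1} ≤ (√2 + 1)(√V_t - √V_{t-1}). The right-hand sides are nonnegative by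
monotonicity, so the sum over the restricted index set is at most the full telescoping sum
(√2 + 1)(√V_T - √V_0) ≤ (√2 + 1) √V_T.
-/

open Finset Real

theorem Finset.sum_Icc_one_sub_pred {M : Type*} [AddCommGroup M] (f : ℕ → M) (n : ℕ) :
    ∑ i ∈ Icc 1 n, (f i - f (i - 1)) = f n - f 0 := by
  induction n with
  | zero => simp
  | succ n ih =>
    rw [Finset.sum_Icc_succ_top (by omega), ih, Nat.add_sub_cancel]
    abel

theorem sub_div_sqrt_le_mul_sqrt_sub {a b c : ℝ} (ha : 0 < a) (hab : a ≤ b) (hbc : b ≤ c * a) :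
    (b - a) / √a ≤ (√c + 1) * (√b - √a) := by
  have hsqrt_a : 0 < √a := sqrt_pos.2 ha
  have hsqrt_mono : 0 ≤ √b - √a := sub_nonneg.2 (sqrt_le_sqrt hab)
  have hsqrt_b : √b ≤ √c * √a := by
    rw [← sqrt_mul' c ha.le]
    exact sqrt_le_sqrt hbc
  have hfactor : b - a = (√b - √a) * (√b + √a) := by
    linear_combination sq_sqrt ha.le - sq_sqrt (ha.le.trans hab)
  rw [div_le_iff₀ hsqrt_a, hfactor]
  calc (√b - √a) * (√b + √a) ≤ (√b - √a) * ((√c + 1) * √a) := by gcongr; linarith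
    _ = (√c + 1) * (√b - √a) * √a := by ring

theorem telescoping_variance_bound_general (T : ℕ) (V : ℕ → ℝ)
    (hmono : Monotone V)
    (hdouble : ∀ t, 1 ≤ t → 0 < V (t - 1) → V t ≤ 2 * V (t - 1)) :
    ∑ t ∈ (Finset.Icc 1 T).filter (fun t => 0 < V (t - 1)),
        (V t - V (t - 1)) / Real.sqrt (V (t - 1))
      ≤ (Real.sqrt 2 + 1) * Real.sqrt (V T) := by
  have hstep : ∀ t, V (t - 1) ≤ V t := fun t => hmono (Nat.sub_le t 1)
  calc ∑ t ∈ (Icc 1 T).filter (fun t => 0 < V (t - 1)), (V t - V (t - 1)) / √(V (t - 1))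
      ≤ ∑ t ∈ (Icc 1 T).filter (fun t => 0 < V (t - 1)), (√2 + 1) * (√(V t) - √(V (t - 1))) := by
        refine sum_le_sum fun t ht => ?_
        obtain ⟨ht, hpos⟩ := mem_filter.1 ht
        exact sub_div_sqrt_le_mul_sqrt_sub hpos (hstep t) (hdouble t (mem_Icc.1 ht).1 hpos)
    _ ≤ ∑ t ∈ Icc 1 T, (√2 + 1) * (√(V t) - √(V (t - 1))) :=
        sum_le_sum_of_subset_of_nonneg (filter_subset _ _) fun t _ _ =>
          mul_nonneg (by positivity) (sub_nonneg.2 (sqrt_le_sqrt (hstep t)))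
    _ = (√2 + 1) * (√(V T) - √(V 0)) := by
        rw [← mul_sum, sum_Icc_one_sub_pred (fun t => √(V t))]
    _ ≤ (√2 + 1) * √(V T) := by
        gcongr
        exact sub_le_self _ (sqrt_nonneg _)

theorem telescoping_variance_bound (T : ℕ) (V : ℕ → ℝ)
    (h0 : V 0 = 0) (hmono : Monotone V)
    (hdouble : ∀ t, 1 ≤ t → 0 < V (t - 1) → V t ≤ 2 * V (t - 1)) :
    ∑ t ∈ (Finset.Icc 1 T).filter (fun t => 0 < V (t - 1)),
        (V t - V (t - 1)) / Real.sqrt (V (t - 1))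
      ≤ (Real.sqrt 2 + 1) * Real.sqrt (V T) :=
  telescoping_variance_bound_general T V hmono hdouble
end
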